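/- Let 0 < α < n. There exists a constant C(n,α) such that for every nonnegative f ∈ L¹_loc(ℝ^n), every b ∈ BMO(ℝ^n), and every x ∈ ℝ^n, |[b, I_α]f(x)| ≤ C(n,α) sup_{t ∈ {0,±1/3}^n} C_b^{D^t} f(x), where for a dyadic grid D, C_b^D f(x) = Σ_{Q ∈ D} |Q|^{α/n} ⟨|b(x) − b(·)| f⟩_Q χ_Q(x) = Σ_{Q ∈ D} |Q|^{α/n} (|Q|^{-1} ∫_Q |b(x) − b(y)| f(y) dy) χ_Q(x). -/

import Mathlib

open MeasureTheory ENNReal Set Filter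
open scoped NNReal

noncomputable section

abbrev Eucl (n : ℕ) := EuclideanSpace ℝ (Fin n)

/-- The half-open cube in `ℝⁿ` with corner `a` and side length `h`. -/
def cube (n : ℕ) (a : Fin n → ℝ) (h : ℝ) : Set (Eucl n) :=
  {x | ∀ i, a i ≤ x i ∧ x i < a i + h}

/-- Average of an `ℝ≥0∞`-valued function over a set (w.r.t. Lebesgue measure). -/
def lavg {n : ℕ} (Q : Set (Eucl n)) (g : Eucl n → ℝ≥0∞) : ℝ≥0∞ :=
  (∫⁻ x in Q, g x) / volume Q

/-- `u(E) = ∫_E u dx` for a weight `u`. -/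
def setW {n : ℕ} (u : Eucl n → ℝ) (s : Set (Eucl n)) : ℝ≥0∞ :=
  ∫⁻ x in s, ENNReal.ofReal (u x)

/-- A weight: nonnegative, measurable, positive on a set of positive measure. -/
def Weight {n : ℕ} (u : Eucl n → ℝ) : Prop :=
  Measurable u ∧ (∀ x, 0 ≤ u x) ∧ 0 < volume {x | 0 < u x}

/-- The fractional maximal operator `M_α`. -/
def maxFn (n : ℕ) (α : ℝ) (f : Eucl n → ℝ) (x : Eucl n) : ℝ≥0∞ :=
  ⨆ (a : Fin n → ℝ) (h : ℝ) (_ : 0 < h) (_ : x ∈ cube n a h),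
    volume (cube n a h) ^ (α / (n:ℝ)) * lavg (cube n a h) (fun y => ENNReal.ofReal |f y|)

/-- The fractional maximal operator restricted to a family of cubes. -/
def maxFnGrid (n : ℕ) (α : ℝ) (D : Set (Set (Eucl n))) (f : Eucl n → ℝ) (x : Eucl n) : ℝ≥0∞ :=
  ⨆ (Q : Set (Eucl n)) (_ : Q ∈ D) (_ : x ∈ Q),
    volume Q ^ (α / (n:ℝ)) * lavg Q (fun y => ENNReal.ofReal |f y|)

/-- The fractional integral `I_α`, as a positive (`ℝ≥0∞`-valued) operator. -/
def fracIntE (n : ℕ) (α : ℝ) (f : Eucl n → ℝ) (x : Eucl n) : ℝ≥0∞ :=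
  ∫⁻ y, ENNReal.ofReal (f y) * ENNReal.ofReal (‖x - y‖ ^ (α - (n:ℝ)))

/-- The dyadic fractional integral associated to a family of cubes. -/
def fracIntGrid (n : ℕ) (α : ℝ) (D : Set (Set (Eucl n))) (f : Eucl n → ℝ) (x : Eucl n) : ℝ≥0∞ :=
  ∑' Q : D, Set.indicator (Q : Set (Eucl n))
    (fun _ => volume (Q : Set (Eucl n)) ^ (α / (n:ℝ)) *
      lavg (Q : Set (Eucl n)) (fun y => ENNReal.ofReal (f y))) x

/-- The standard dyadic grid `Δ`. -/
def stdGrid (n : ℕ) : Set (Set (Eucl n)) :=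
  {Q | ∃ (k : ℤ) (m : Fin n → ℤ), Q = cube n (fun i => (2:ℝ) ^ k * (m i : ℝ)) ((2:ℝ) ^ k)}

/-- The translated dyadic grids `𝒟^t`. -/
def transGrid (n : ℕ) (t : Fin n → ℝ) : Set (Set (Eucl n)) :=
  {Q | ∃ (j : ℤ) (m : Fin n → ℤ), Q = cube n (fun i => (2:ℝ) ^ j * ((m i : ℝ) + t i)) ((2:ℝ) ^ j)}

def thirds : Set ℝ := {0, 1/3, -1/3}

/-- A collection of cubes is a dyadic grid. -/
def IsDyadicGrid (n : ℕ) (D : Set (Set (Eucl n))) : Prop :=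
  (∀ Q ∈ D, ∃ (a : Fin n → ℝ) (k : ℤ), Q = cube n a ((2:ℝ) ^ k)) ∧
  (∀ P ∈ D, ∀ Q ∈ D, P ∩ Q = P ∨ P ∩ Q = Q ∨ P ∩ Q = ∅) ∧
  (∀ (k : ℤ) (x : Eucl n), ∃! Q, Q ∈ D ∧ (∃ a, Q = cube n a ((2:ℝ) ^ k)) ∧ x ∈ Q)

/-- The set `E(Q) = Q \ ⋃ {P ∈ S : P ⊊ Q}`. -/
def sparseE {n : ℕ} (S : Set (Set (Eucl n))) (Q : Set (Eucl n)) : Set (Eucl n) :=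
  Q \ ⋃ P ∈ {P | P ∈ S ∧ P ⊂ Q}, P

/-- A sparse family of cubes. -/
def IsSparse {n : ℕ} (S : Set (Set (Eucl n))) : Prop :=
  ∀ Q ∈ S, volume Q ≤ 2 * volume (sparseE S Q)

/-- The sparse linearized maximal operator `L_α^S`. -/
def sparseL (n : ℕ) (α : ℝ) (S : Set (Set (Eucl n))) (f : Eucl n → ℝ) (x : Eucl n) : ℝ≥0∞ :=
  ∑' Q : S, Set.indicator (sparseE S (Q : Set (Eucl n)))
    (fun _ => volume (Q : Set (Eucl n)) ^ (α / (n:ℝ)) *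
      lavg (Q : Set (Eucl n)) (fun y => ENNReal.ofReal (f y))) x

/-- The Calderón–Zygmund cubes: the maximal cubes `Q ∈ Δ` with `⟨|f|⟩_Q > λ`. -/
def czCubes (n : ℕ) (f : Eucl n → ℝ) (lam : ℝ) : Set (Set (Eucl n)) :=
  {Q | Q ∈ stdGrid n ∧ ENNReal.ofReal lam < lavg Q (fun y => ENNReal.ofReal |f y|) ∧
    ∀ P ∈ stdGrid n, Q ⊆ P →
      ENNReal.ofReal lam < lavg P (fun y => ENNReal.ofReal |f y|) → P = Q}

/-- The one-weight `A_{p,q}` constant, `1 < p`. -/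
def apqConst (n : ℕ) (p q : ℝ) (w : Eucl n → ℝ) : ℝ≥0∞ :=
  ⨆ (a : Fin n → ℝ) (h : ℝ) (_ : 0 < h),
    (lavg (cube n a h) (fun x => ENNReal.ofReal (w x ^ q))) ^ (1/q) *
    (lavg (cube n a h) (fun x => ENNReal.ofReal (w x ^ (-(p/(p-1)))))) ^ (1 - 1/p)

/-- The one-weight `A_{1,q}` constant. -/
def a1qConst (n : ℕ) (q : ℝ) (w : Eucl n → ℝ) : ℝ≥0∞ :=
  ⨆ (a : Fin n → ℝ) (h : ℝ) (_ : 0 < h),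
    (lavg (cube n a h) (fun x => ENNReal.ofReal (w x ^ q))) ^ (1/q) *
    essSup (fun x => ENNReal.ofReal (w x)⁻¹) (volume.restrict (cube n a h))

/-- The two-weight `A_{p,q}^α` constant. -/
def apqAlpha (n : ℕ) (α p q : ℝ) (u σ : Eucl n → ℝ) : ℝ≥0∞ :=
  ⨆ (a : Fin n → ℝ) (h : ℝ) (_ : 0 < h),
    volume (cube n a h) ^ (α / (n:ℝ) + 1/q - 1/p) *
    ((lavg (cube n a h) (fun x => ENNReal.ofReal (u x))) ^ (1/q) *
     (lavg (cube n a h) (fun x => ENNReal.ofReal (σ x))) ^ (1 - 1/p))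

/-- Sawyer testing constant for the fractional maximal operator. -/
def maxTestConst (n : ℕ) (α p q : ℝ) (u σ : Eucl n → ℝ) : ℝ≥0∞ :=
  ⨆ (a : Fin n → ℝ) (h : ℝ) (_ : 0 < h) (_ : 0 < setW σ (cube n a h)),
    setW σ (cube n a h) ^ (-(1/p)) *
    (∫⁻ x in cube n a h,
      (maxFn n α ((cube n a h).indicator σ) x) ^ q * ENNReal.ofReal (u x)) ^ (1/q)

/-- Sawyer testing constant for the fractional integral operator. -/
def fracTestConst (n : ℕ) (α p q : ℝ) (u σ : Eucl n → ℝ) : ℝ≥0∞ :=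
  ⨆ (a : Fin n → ℝ) (h : ℝ) (_ : 0 < h) (_ : 0 < setW σ (cube n a h)),
    setW σ (cube n a h) ^ (-(1/p)) *
    (∫⁻ x in cube n a h,
      (fracIntE n α ((cube n a h).indicator σ) x) ^ q * ENNReal.ofReal (u x)) ^ (1/q)

/-- The BMO seminorm. -/
def bmoNorm (n : ℕ) (b : Eucl n → ℝ) : ℝ≥0∞ :=
  ⨆ (a : Fin n → ℝ) (h : ℝ) (_ : 0 < h),
    lavg (cube n a h) (fun x => ENNReal.ofReal |b x - ⨍ y in cube n a h, b y|)

/-- The commutator `[b, I_α] f`. -/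
def commFrac (n : ℕ) (α : ℝ) (b f : Eucl n → ℝ) (x : Eucl n) : ℝ :=
  ∫ y, (b x - b y) * f y * ‖x - y‖ ^ (α - (n:ℝ))

/-- The dyadic commutator-type operator `C_b^D`. -/
def commGrid (n : ℕ) (α : ℝ) (D : Set (Set (Eucl n))) (b f : Eucl n → ℝ) (x : Eucl n) : ℝ≥0∞ :=
  ∑' Q : D, Set.indicator (Q : Set (Eucl n))
    (fun _ => volume (Q : Set (Eucl n)) ^ (α / (n:ℝ)) *
      lavg (Q : Set (Eucl n)) (fun y => ENNReal.ofReal (|b x - b y| * f y))) x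

/-- Young functions. -/
def IsYoung (B : ℝ → ℝ) : Prop :=
  ContinuousOn B (Ici 0) ∧ ConvexOn ℝ (Ici 0) B ∧ StrictMonoOn B (Ici 0) ∧
  B 0 = 0 ∧ Tendsto (fun t => B t / t) atTop atTop

/-- The associate Young function `B̄(t) = sup_{s>0} (st − B(s))`. -/
def youngConj (B : ℝ → ℝ) (t : ℝ) : ℝ :=
  sSup ((fun s => s * t - B s) '' Ioi 0)

/-- The `B_p` condition: `∫_1^∞ B(t)/t^p dt/t < ∞`. -/
def IsBp (B : ℝ → ℝ) (p : ℝ) : Prop :=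
  IntegrableOn (fun t => B t / t ^ (p + 1)) (Ioi 1)

/-- The normalized Luxemburg norm of `f` on the cube `Q`. -/
def luxNorm {n : ℕ} (B : ℝ → ℝ) (Q : Set (Eucl n)) (f : Eucl n → ℝ) : ℝ :=
  sInf {lam : ℝ | 0 < lam ∧ (⨍ x in Q, B (|f x| / lam)) ≤ 1}

/-- The separated bump constant `[u,σ]_{A_{p,q,B}^α}` (bump on the right). -/
def bumpRight (n : ℕ) (α p q : ℝ) (B : ℝ → ℝ) (u σ : Eucl n → ℝ) : ℝ≥0∞ :=
  ⨆ (a : Fin n → ℝ) (h : ℝ) (_ : 0 < h),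
    volume (cube n a h) ^ (α / (n:ℝ) + 1/q - 1/p) *
    ((lavg (cube n a h) (fun x => ENNReal.ofReal (u x))) ^ (1/q) *
     ENNReal.ofReal (luxNorm B (cube n a h) (fun x => σ x ^ ((p-1)/p))))

/-- The conjoined bump constant `[u,σ]_{A_{p,q,A,B}^α}`. -/
def bumpBoth (n : ℕ) (α p q : ℝ) (A B : ℝ → ℝ) (u σ : Eucl n → ℝ) : ℝ≥0∞ :=
  ⨆ (a : Fin n → ℝ) (h : ℝ) (_ : 0 < h),
    volume (cube n a h) ^ (α / (n:ℝ) + 1/q - 1/p) *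
    (ENNReal.ofReal (luxNorm A (cube n a h) (fun x => u x ^ (1/q))) *
     ENNReal.ofReal (luxNorm B (cube n a h) (fun x => σ x ^ ((p-1)/p))))

/-- Strong operator norm of `I_α(·σ) : L^p(σ) → L^q(u)`. -/
def strongNormI (n : ℕ) (α p q : ℝ) (u σ : Eucl n → ℝ) : ℝ≥0∞ :=
  ⨆ (f : Eucl n → ℝ) (_ : Measurable f)
    (_ : (∫⁻ x, ENNReal.ofReal |f x| ^ p * ENNReal.ofReal (σ x)) ≤ 1),
    (∫⁻ x, (fracIntE n α (fun y => |f y| * σ y) x) ^ q * ENNReal.ofReal (u x)) ^ (1/q)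

/-- Weak operator norm of `I_α(·σ) : L^p(σ) → L^{q,∞}(u)`. -/
def weakNormI (n : ℕ) (α p q : ℝ) (u σ : Eucl n → ℝ) : ℝ≥0∞ :=
  ⨆ (f : Eucl n → ℝ) (_ : Measurable f)
    (_ : (∫⁻ x, ENNReal.ofReal |f x| ^ p * ENNReal.ofReal (σ x)) ≤ 1)
    (t : ℝ) (_ : 0 < t),
    ENNReal.ofReal t *
      (setW u {x | ENNReal.ofReal t < fracIntE n α (fun y => |f y| * σ y) x}) ^ (1/q)

end

/-! For `x ≠ y` the one-third trick yields a shift `t ∈ {0, ±1/3}ⁿ` and a cube `Q ∈ 𝒟^t` containing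
`x` and `y` with `3|x - y| ≤ ℓ(Q) ≤ 6|x - y|`, hence `|x - y|^{α-n} ≤ 6^{n-α} |Q|^{α/n - 1}`.
So the Riesz kernel is dominated by `6^{n-α}` times the sum over the `3ⁿ` shifts of the dyadic
kernels `Σ_{Q ∈ 𝒟^t} |Q|^{α/n - 1} χ_Q(x) χ_Q(y)`. Integrating `|b(x) - b(y)| f(y)` against the
dyadic kernel of `𝒟^t` gives exactly `C_b^{𝒟^t} f(x)`, and a sum of `3ⁿ` terms is at most `3ⁿ`
times their supremum. -/

lemma cube_eq_preimage (n : ℕ) (a : Fin n → ℝ) (h : ℝ) :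
    cube n a h = (MeasurableEquiv.toLp 2 (Fin n → ℝ)).symm ⁻¹'
      Set.univ.pi fun i => Ico (a i) (a i + h) := by
  ext x
  simp [cube, Set.mem_pi, mem_Ico]

lemma measurableSet_cube (n : ℕ) (a : Fin n → ℝ) (h : ℝ) : MeasurableSet (cube n a h) := by
  rw [cube_eq_preimage]
  exact (MeasurableEquiv.toLp 2 (Fin n → ℝ)).symm.measurable
    (MeasurableSet.univ_pi fun _ => measurableSet_Ico)

lemma volume_cube (n : ℕ) (a : Fin n → ℝ) (h : ℝ) :
    volume (cube n a h) = ENNReal.ofReal h ^ n := by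
  rw [cube_eq_preimage,
    (EuclideanSpace.volume_preserving_symm_measurableEquiv_toLp (Fin n)).measure_preimage
      (MeasurableSet.univ_pi fun _ => measurableSet_Ico).nullMeasurableSet,
    volume_pi_pi]
  simp [Real.volume_Ico]

lemma volume_cube_rpow_div_volume {n : ℕ} (hn : n ≠ 0) (α : ℝ) (a : Fin n → ℝ) {s : ℝ}
    (hs : 0 < s) :
    volume (cube n a s) ^ (α / n) / volume (cube n a s) = ENNReal.ofReal (s ^ (α - n)) := by
  have hs0 : ENNReal.ofReal s ≠ 0 := ENNReal.ofReal_pos.2 hs |>.ne'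
  have hαn : (n : ℝ) * (α / n) = α := by field_simp
  rw [volume_cube, ← ENNReal.rpow_natCast, ← ENNReal.rpow_mul, hαn, div_eq_mul_inv,
    ← ENNReal.rpow_neg, ← ENNReal.rpow_add _ _ hs0 ENNReal.ofReal_ne_top,
    ENNReal.ofReal_rpow_of_pos hs, sub_eq_add_neg]

lemma transGrid_countable (n : ℕ) (t : Fin n → ℝ) : (transGrid n t).Countable := by
  refine (Set.countable_range fun p : ℤ × (Fin n → ℤ) =>
    cube n (fun i => (2:ℝ) ^ p.1 * (p.2 i + t i)) ((2:ℝ) ^ p.1)).mono ?_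
  rintro Q ⟨j, m, rfl⟩
  exact ⟨(j, m), rfl⟩

lemma measurableSet_of_mem_transGrid {n : ℕ} {t : Fin n → ℝ} {Q : Set (Eucl n)}
    (hQ : Q ∈ transGrid n t) : MeasurableSet Q := by
  obtain ⟨j, m, rfl⟩ := hQ
  exact measurableSet_cube _ _ _

lemma exists_thirds_interval {s u v : ℝ} (hs : 0 < s) (huv : v - u ≤ s / 3) :
    ∃ t ∈ thirds, ∃ m : ℤ, s * (m + t) ≤ u ∧ v < s * (m + t) + s := by
  set k : ℤ := ⌊3 * u / s⌋
  have hk : (k : ℝ) ≤ 3 * u / s := Int.floor_le _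
  have hk' : 3 * u / s < k + 1 := Int.lt_floor_add_one _
  rw [le_div_iff₀ hs] at hk
  rw [div_lt_iff₀ hs] at hk'
  -- `m + t = k / 3`, with `m` the integer nearest to `k / 3`
  obtain ⟨m, d, hkd, hd⟩ : ∃ m d : ℤ, k = 3 * m + d ∧ (d = -1 ∨ d = 0 ∨ d = 1) :=
    ⟨(k + 1) / 3, k - 3 * ((k + 1) / 3), by ring, by omega⟩
  have hkd' : (k : ℝ) = 3 * m + d := mod_cast hkd
  refine ⟨d / 3, ?_, m, ?_⟩
  · rcases hd with rfl | rfl | rfl <;> norm_num [thirds]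
  · constructor <;> nlinarith

lemma exists_thirds_cube_mem {n : ℕ} (x y : Eucl n) {s : ℝ} (hs : 0 < s)
    (hxy : 3 * ‖x - y‖ ≤ s) :
    ∃ t : Fin n → ℝ, (∀ i, t i ∈ thirds) ∧ ∃ m : Fin n → ℤ,
      x ∈ cube n (fun i => s * (m i + t i)) s ∧ y ∈ cube n (fun i => s * (m i + t i)) s := by
  have hcoord (i : Fin n) : ∃ t ∈ thirds, ∃ m : ℤ,
      s * (m + t) ≤ min (x i) (y i) ∧ max (x i) (y i) < s * (m + t) + s := by
    refine exists_thirds_interval hs ?_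
    have : |x i - y i| ≤ ‖x - y‖ := by
      simpa using PiLp.norm_apply_le (x - y) i
    rw [max_sub_min_eq_abs']
    linarith
  choose t ht m hlo hhi using hcoord
  exact ⟨t, ht, m, fun i => ⟨(hlo i).trans (min_le_left _ _), (le_max_left _ _).trans_lt (hhi i)⟩,
    fun i => ⟨(hlo i).trans (min_le_right _ _), (le_max_right _ _).trans_lt (hhi i)⟩⟩

lemma exists_transGrid_mem_of_ne {n : ℕ} {x y : Eucl n} (hxy : x ≠ y) :
    ∃ t : Fin n → ℝ, (∀ i, t i ∈ thirds) ∧ ∃ (a : Fin n → ℝ) (j : ℤ),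
      cube n a (2 ^ j) ∈ transGrid n t ∧ x ∈ cube n a (2 ^ j) ∧ y ∈ cube n a (2 ^ j) ∧
        (2:ℝ) ^ j ≤ 6 * ‖x - y‖ := by
  have hr : 0 < 3 * ‖x - y‖ := by simpa [sub_eq_zero] using hxy
  obtain ⟨j, hlo, hhi⟩ := exists_mem_Ioc_zpow hr one_lt_two
  rw [zpow_add_one₀ two_ne_zero] at hhi
  obtain ⟨t, ht, m, hx, hy⟩ := exists_thirds_cube_mem x y (zpow_pos two_pos (j + 1))
    (by rwa [zpow_add_one₀ two_ne_zero])
  exact ⟨t, ht, _, j + 1, ⟨j + 1, m, rfl⟩, hx, hy, by rw [zpow_add_one₀ two_ne_zero]; linarith⟩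

lemma rpow_le_rpow_mul_of_le_mul {r s c e : ℝ} (hs : 0 < s) (hc : 0 < c) (h : s ≤ c * r)
    (he : e ≤ 0) : r ^ e ≤ c ^ (-e) * s ^ e :=
  calc r ^ e ≤ (s / c) ^ e :=
        Real.rpow_le_rpow_of_nonpos (div_pos hs hc) ((div_le_iff₀' hc).2 h) he
    _ = c ^ (-e) * s ^ e := by
        rw [Real.div_rpow hs.le hc.le, Real.rpow_neg hc.le, div_eq_mul_inv, mul_comm]

noncomputable def gridKernel (n : ℕ) (α : ℝ) (D : Set (Set (Eucl n))) (x y : Eucl n) : ℝ≥0∞ :=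
  ∑' Q : D, (Q : Set (Eucl n)).indicator
    (fun _ => (Q : Set (Eucl n)).indicator
      (fun _ => volume (Q : Set (Eucl n)) ^ (α / n) / volume (Q : Set (Eucl n))) x) y

section gridKernel

variable {n : ℕ} {α : ℝ} {D : Set (Set (Eucl n))}

lemma measurable_gridKernel (hD : D.Countable) (hDm : ∀ Q ∈ D, MeasurableSet Q) (x : Eucl n) :
    Measurable (gridKernel n α D x) :=
  have := hD.to_subtype
  Measurable.tsum fun Q => measurable_const.indicator (hDm Q Q.2)

lemma le_gridKernel {Q : Set (Eucl n)} (hQ : Q ∈ D) {x y : Eucl n} (hx : x ∈ Q) (hy : y ∈ Q) :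
    volume Q ^ (α / n) / volume Q ≤ gridKernel n α D x y := by
  refine le_of_eq_of_le ?_ (ENNReal.le_tsum ⟨Q, hQ⟩)
  simp [indicator_of_mem hx, indicator_of_mem hy]

lemma lintegral_mul_gridKernel (hD : D.Countable) (hDm : ∀ Q ∈ D, MeasurableSet Q)
    {g : Eucl n → ℝ≥0∞} (hg : AEMeasurable g) (x : Eucl n) :
    ∫⁻ y, g y * gridKernel n α D x y =
      ∑' Q : D, (Q : Set (Eucl n)).indicator
        (fun _ => volume (Q : Set (Eucl n)) ^ (α / n) * lavg (Q : Set (Eucl n)) g) x := by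
  have := hD.to_subtype
  have hterm (y : Eucl n) : g y * gridKernel n α D x y =
      ∑' Q : D, (Q : Set (Eucl n)).indicator (fun y => g y * (Q : Set (Eucl n)).indicator
        (fun _ => volume (Q : Set (Eucl n)) ^ (α / n) / volume (Q : Set (Eucl n))) x) y := by
    rw [gridKernel, ← ENNReal.tsum_mul_left]
    congr with Q
    by_cases hy : y ∈ (Q : Set (Eucl n)) <;> simp [hy]
  rw [lintegral_congr hterm, lintegral_tsum fun Q => (hg.mul_const _).indicator (hDm _ Q.2)]
  congr with Q
  rw [lintegral_indicator (hDm _ Q.2), lintegral_mul_const'' _ hg.restrict]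
  by_cases hx : x ∈ (Q : Set (Eucl n))
  · simp only [indicator_of_mem hx, lavg, div_eq_mul_inv]
    ring
  · simp [hx]

end gridKernel

noncomputable def thirdsShifts (n : ℕ) : Finset (Fin n → ℝ) :=
  Fintype.piFinset fun _ => {0, 1/3, -1/3}

lemma mem_thirdsShifts {n : ℕ} {t : Fin n → ℝ} : t ∈ thirdsShifts n ↔ ∀ i, t i ∈ thirds := by
  simp [thirdsShifts, thirds]

lemma card_thirdsShifts_le (n : ℕ) : (thirdsShifts n).card ≤ 3 ^ n := by
  rw [thirdsShifts, Fintype.card_piFinset, Finset.prod_const, Finset.card_univ, Fintype.card_fin]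
  exact Nat.pow_le_pow_left (Finset.card_le_three) n

lemma sum_thirdsShifts_le_mul_iSup {n : ℕ} (F : (Fin n → ℝ) → ℝ≥0∞) :
    ∑ t ∈ thirdsShifts n, F t ≤ 3 ^ n * ⨆ (t : Fin n → ℝ) (_ : ∀ i, t i ∈ thirds), F t :=
  calc ∑ t ∈ thirdsShifts n, F t
      ≤ (thirdsShifts n).card • ⨆ (t : Fin n → ℝ) (_ : ∀ i, t i ∈ thirds), F t :=
        Finset.sum_le_card_nsmul _ _ _ fun t ht => le_iSup₂_of_le t (mem_thirdsShifts.1 ht) le_rfl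
    _ ≤ 3 ^ n * ⨆ (t : Fin n → ℝ) (_ : ∀ i, t i ∈ thirds), F t := by
        rw [nsmul_eq_mul]
        gcongr
        exact_mod_cast card_thirdsShifts_le n

lemma ofReal_rpow_norm_sub_le_sum_gridKernel {n : ℕ} (hn : n ≠ 0) {α : ℝ} (hαn : α < n)
    (x y : Eucl n) :
    ENNReal.ofReal (‖x - y‖ ^ (α - n)) ≤
      ENNReal.ofReal (6 ^ ((n : ℝ) - α)) *
        ∑ t ∈ thirdsShifts n, gridKernel n α (transGrid n t) x y := by
  rcases eq_or_ne x y with rfl | hxy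
  · simp [Real.zero_rpow (sub_ne_zero.2 hαn.ne)]
  obtain ⟨t, ht, a, j, hQ, hx, hy, hj⟩ := exists_transGrid_mem_of_ne hxy
  have hs : (0 : ℝ) < 2 ^ j := zpow_pos two_pos j
  calc ENNReal.ofReal (‖x - y‖ ^ (α - n))
      ≤ ENNReal.ofReal (6 ^ ((n : ℝ) - α) * (2 ^ j) ^ (α - n)) := by
        refine ENNReal.ofReal_le_ofReal ?_
        have := rpow_le_rpow_mul_of_le_mul (e := α - n) hs (by norm_num) hj (by linarith)
        rwa [neg_sub] at this
    _ = ENNReal.ofReal (6 ^ ((n : ℝ) - α)) *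
          (volume (cube n a (2 ^ j)) ^ (α / n) / volume (cube n a (2 ^ j))) := by
        rw [volume_cube_rpow_div_volume hn α a hs, ENNReal.ofReal_mul (by positivity)]
    _ ≤ ENNReal.ofReal (6 ^ ((n : ℝ) - α)) * gridKernel n α (transGrid n t) x y := by
        gcongr
        exact le_gridKernel hQ hx hy
    _ ≤ _ := by
        gcongr
        exact Finset.single_le_sum (f := fun t => gridKernel n α (transGrid n t) x y)
          (fun _ _ => bot_le) (mem_thirdsShifts.2 ht)

lemma ofReal_abs_commFrac_le {n : ℕ} (α : ℝ) (b : Eucl n → ℝ) {f : Eucl n → ℝ}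
    (hf : ∀ y, 0 ≤ f y) (x : Eucl n) :
    ENNReal.ofReal |commFrac n α b f x| ≤
      ∫⁻ y, ENNReal.ofReal (|b x - b y| * f y) * ENNReal.ofReal (‖x - y‖ ^ (α - n)) := by
  rw [← Real.norm_eq_abs, ofReal_norm]
  refine (enorm_integral_le_lintegral_enorm _).trans_eq (lintegral_congr fun y => ?_)
  rw [← ofReal_norm, Real.norm_eq_abs, abs_mul, abs_mul, abs_of_nonneg (hf y),
    abs_of_nonneg (Real.rpow_nonneg (norm_nonneg _) _),
    ENNReal.ofReal_mul (mul_nonneg (abs_nonneg _) (hf y))]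

theorem statement4_general (n : ℕ) (hn : 0 < n) (α : ℝ) (hαn : α < n) :
    ∃ C : ℝ≥0, 0 < C ∧
      ∀ f b : Eucl n → ℝ, LocallyIntegrable f volume → (∀ y, 0 ≤ f y) →
        LocallyIntegrable b volume → bmoNorm n b ≠ ⊤ →
        ∀ x : Eucl n,
          ENNReal.ofReal |commFrac n α b f x| ≤
            (C : ℝ≥0∞) * ⨆ (t : Fin n → ℝ) (_ : ∀ i, t i ∈ thirds),
              commGrid n α (transGrid n t) b f x := by
  refine ⟨Real.toNNReal (6 ^ ((n : ℝ) - α)) * 3 ^ n,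
    mul_pos (Real.toNNReal_pos.2 (by positivity)) (by positivity), ?_⟩
  intro f b hf hf0 hb _ x
  set g : Eucl n → ℝ≥0∞ := fun y => ENNReal.ofReal (|b x - b y| * f y)
  have hg : AEMeasurable g :=
    ((aemeasurable_const.sub hb.aestronglyMeasurable.aemeasurable).abs.mul
      hf.aestronglyMeasurable.aemeasurable).ennreal_ofReal
  have hK (t : Fin n → ℝ) : AEMeasurable fun y => g y * gridKernel n α (transGrid n t) x y :=
    hg.mul (measurable_gridKernel (transGrid_countable n t)
      (fun _ => measurableSet_of_mem_transGrid) x).aemeasurable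
  calc ENNReal.ofReal |commFrac n α b f x|
      ≤ ∫⁻ y, g y * ENNReal.ofReal (‖x - y‖ ^ (α - n)) := ofReal_abs_commFrac_le α b hf0 x
    _ ≤ ∫⁻ y, ENNReal.ofReal (6 ^ ((n : ℝ) - α)) *
          ∑ t ∈ thirdsShifts n, g y * gridKernel n α (transGrid n t) x y := by
        refine lintegral_mono fun y => ?_
        rw [← Finset.mul_sum, mul_left_comm]
        gcongr
        exact ofReal_rpow_norm_sub_le_sum_gridKernel hn.ne' hαn x y
    _ = ENNReal.ofReal (6 ^ ((n : ℝ) - α)) *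
          ∑ t ∈ thirdsShifts n, commGrid n α (transGrid n t) b f x := by
        rw [lintegral_const_mul' _ _ ENNReal.ofReal_ne_top, lintegral_finsetSum' _ fun t _ => hK t]
        congr! 2 with t
        exact lintegral_mul_gridKernel (transGrid_countable n t)
          (fun _ => measurableSet_of_mem_transGrid) hg x
    _ ≤ _ := by
        rw [ENNReal.coe_mul, ENNReal.coe_pow, ENNReal.coe_ofNat, mul_assoc]
        exact mul_le_mul_right (sum_thirdsShifts_le_mul_iSup _) _

/-- dyadic domination of the commutator. -/
theorem statement4 (n : ℕ) (hn : 0 < n) (α : ℝ) (hα0 : 0 < α) (hαn : α < n) :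
    ∃ C : ℝ≥0, 0 < C ∧
      ∀ f b : Eucl n → ℝ, LocallyIntegrable f volume → (∀ y, 0 ≤ f y) →
        LocallyIntegrable b volume → bmoNorm n b ≠ ⊤ →
        ∀ x : Eucl n,
          ENNReal.ofReal |commFrac n α b f x| ≤
            (C : ℝ≥0∞) * ⨆ (t : Fin n → ℝ) (_ : ∀ i, t i ∈ thirds),
              commGrid n α (transGrid n t) b f x :=
  statement4_general n hn α hαn
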